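/- For non-negative integers n and r, the sequence of numbers a_n = -sum_{k=0}^{n} (-1)^{k+1} * k!/(k+1) * S_r(n+r, k+r) has exponential generating function sum_{n>=0} a_n t^n / n! = t * e^{rt} / (e^t - 1) for |t| < 2π. -/

import Mathlib

open Finset Real

/-- Stirling numbers of the second kind `S(n, k)`. -/
def stirling2 : ℕ → ℕ → ℕ
  | 0, 0 => 1
  | 0, _ + 1 => 0
  | _ + 1, 0 => 0
  | n + 1, k + 1 => (k + 1) * stirling2 n (k + 1) + stirling2 n k

/-- The `r`-Stirling numbers of the second kind `S_r(n, k)` of Broder: the number of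
partitions of `{1, …, n}` into `k` non-empty subsets such that `1, …, r` lie in
distinct subsets (with the convention `S_r(n, k) = 0` for `n < r`). -/
def rStirling (r : ℕ) : ℕ → ℕ → ℕ
  | 0, k => if r = 0 ∧ k = 0 then 1 else 0
  | n + 1, k =>
    if n + 1 < r then 0
    else if n + 1 = r then (if k = r then 1 else 0)
    else
      match k with
      | 0 => 0
      | k + 1 => (k + 1) * rStirling r n (k + 1) + rStirling r n k

/-!
Broder's expansion `S_r(n + r, k + r) = ∑ⱼ C(n, j) rⁿ⁻ʲ S(j, k)` and the classical formula
`Bⱼ = ∑ₖ (-1)ᵏ k! / (k + 1) S(j, k)` identify `aₙ` with the Bernoulli polynomial value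
`Bₙ(r) = ∑ⱼ C(n, j) Bⱼ rⁿ⁻ʲ` (with `B₁ = -1/2`). Hence `∑ aₙ tⁿ / n!` is the Cauchy product of
`∑ Bⱼ tʲ / j!` with `e^{rt}`. The Bernoulli series converges for `|t| < 2π` because
`ζ(2k) ≤ ζ(2) < 2` gives `|B₂ₖ| ≤ 4 (2k)! / (2π)^{2k}`, and its sum is `t / (eᵗ - 1)` because,
by the recurrence `∑_{j<n} C(n, j) Bⱼ = [n = 1]`, multiplying it by `eᵗ` just adds `t`.
-/

open Nat (stirlingSecond stirlingSecond_eq_zero_of_lt stirlingSecond_succ_succ)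
open scoped Nat

theorem sum_choose_mul_pow_mul_succ {R : Type*} [CommSemiring R] (x : R) (f : ℕ → R) (n : ℕ) :
    ∑ j ∈ range (n + 2), ((n + 1).choose j : R) * x ^ (n + 1 - j) * f j =
      x * ∑ j ∈ range (n + 1), (n.choose j : R) * x ^ (n - j) * f j +
        ∑ j ∈ range (n + 1), (n.choose j : R) * x ^ (n - j) * f (j + 1) := by
  have := Finset.sum_choose_succ_mul (fun j m => x ^ m * f j) n
  simp only [← mul_assoc] at this
  rw [this, mul_sum]
  congr 1
  refine sum_congr rfl fun j hj => ?_
  rw [Nat.sub_add_comm (mem_range_succ_iff.1 hj), pow_succ]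
  ring

theorem eq_bernoulli_of_sum_choose {c : ℕ → ℚ}
    (hc : ∀ m, ∑ k ∈ range m, (m.choose k : ℚ) * c k = if m = 1 then 1 else 0) (n : ℕ) :
    c n = bernoulli n := by
  induction n using Nat.strong_induction_on with
  | _ n ih =>
    have h := (hc (n + 1)).trans (sum_bernoulli (n + 1)).symm
    rw [sum_range_succ, sum_range_succ, sum_congr rfl fun k hk => by rw [ih k (mem_range.1 hk)],
      add_right_inj, Nat.choose_succ_self_right] at h
    exact mul_left_cancel₀ (by positivity) h

theorem rStirling_succ_succ {r n : ℕ} (k : ℕ) (h : r ≤ n) :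
    rStirling r (n + 1) (k + 1) = (k + 1) * rStirling r n (k + 1) + rStirling r n k := by
  rw [rStirling, if_neg (by omega), if_neg (by omega)]

theorem rStirling_eq_zero_of_lt {r k : ℕ} (hk : k < r) : ∀ n, rStirling r n k = 0
  | 0 => by simp [rStirling]; omega
  | n + 1 => by
    simp only [rStirling]
    split_ifs
    · rfl
    · omega
    · rfl
    · cases k with
      | zero => rfl
      | succ k => simp [rStirling_eq_zero_of_lt hk n, rStirling_eq_zero_of_lt (by omega : k < r) n]

theorem rStirling_self (r k : ℕ) : rStirling r r k = if k = r then 1 else 0 := by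
  cases r <;> simp [rStirling]

theorem rStirling_succ_self {r n : ℕ} (h : r ≤ n) :
    rStirling r (n + 1) r = r * rStirling r n r := by
  cases r with
  | zero => rw [rStirling, if_neg (by omega), if_neg (by omega), zero_mul]
  | succ s => rw [rStirling_succ_succ s h, rStirling_eq_zero_of_lt s.lt_succ_self, add_zero]

theorem rStirling_add_eq_sum_choose (r n k : ℕ) :
    rStirling r (n + r) (k + r) =
      ∑ j ∈ range (n + 1), n.choose j * r ^ (n - j) * stirlingSecond j k := by
  induction n generalizing k with
  | zero => cases k <;> simp [rStirling_self]
  | succ n ih =>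
    have hsum := sum_choose_mul_pow_mul_succ r (fun j => stirlingSecond j k) n
    simp only [Nat.cast_id] at hsum
    rw [hsum, add_right_comm]
    cases k with
    | zero =>
      simp only [stirlingSecond, mul_zero, sum_const_zero, add_zero, zero_add, ← ih 0]
      exact rStirling_succ_self (by omega)
    | succ k =>
      simp only [stirlingSecond_succ_succ, mul_add, sum_add_distrib, ← ih k]
      rw [show k + 1 + r = k + r + 1 by omega, rStirling_succ_succ _ (by omega),
        show k + r + 1 = k + 1 + r by omega, ih (k + 1)]
      simp only [mul_left_comm _ (k + 1), ← mul_sum]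
      ring

theorem rStirling_one_succ (n k : ℕ) : rStirling 1 (n + 1) k = stirlingSecond (n + 1) k := by
  induction n generalizing k with
  | zero => rcases k with _ | _ | k <;> simp [rStirling_self, stirlingSecond_succ_succ]
  | succ n ih =>
    cases k with
    | zero => exact rStirling_eq_zero_of_lt one_pos _
    | succ k => rw [rStirling_succ_succ k (by omega), ih, ih]; rfl

theorem stirlingSecond_succ_succ_eq_sum_choose (n k : ℕ) :
    stirlingSecond (n + 1) (k + 1) = ∑ j ∈ range (n + 1), n.choose j * stirlingSecond j k := by
  simpa [rStirling_one_succ] using rStirling_add_eq_sum_choose 1 n k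

theorem sum_range_mul_stirlingSecond_of_lt {R : Type*} [Semiring R] (f : ℕ → R) {n N : ℕ}
    (h : n < N) :
    ∑ k ∈ range N, f k * stirlingSecond n k = ∑ k ∈ range (n + 1), f k * stirlingSecond n k :=
  (sum_subset (range_subset_range.2 h) fun k _ hk => by
    rw [stirlingSecond_eq_zero_of_lt (by simpa using hk), Nat.cast_zero, mul_zero]).symm

theorem sum_range_neg_one_pow_mul_factorial_mul_stirlingSecond {R : Type*} [CommRing R] (m : ℕ) :
    ∑ k ∈ range (m + 1), (-1 : R) ^ k * k ! * stirlingSecond m (k + 1) =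
      if m = 1 then 1 else 0 := by
  cases m with
  | zero => simp [stirlingSecond]
  | succ n =>
    let g (k : ℕ) : R := (-1) ^ k * k ! * stirlingSecond n k
    have telescope (k : ℕ) :
        (-1 : R) ^ k * k ! * stirlingSecond (n + 1) (k + 1) = g k - g (k + 1) := by
      simp only [g, stirlingSecond_succ_succ, Nat.factorial_succ]
      push_cast
      ring
    rw [sum_congr rfl fun k _ => telescope k, sum_range_sub']
    simp only [g, stirlingSecond_eq_zero_of_lt (show n < n + 1 + 1 by omega), Nat.cast_zero,
      mul_zero, sub_zero]
    cases n <;> simp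

theorem bernoulli_eq_sum_stirlingSecond (n : ℕ) :
    bernoulli n = ∑ k ∈ range (n + 1), (-1 : ℚ) ^ k * k ! / (k + 1) * stirlingSecond n k := by
  set w : ℕ → ℚ := fun k => (-1) ^ k * k ! / (k + 1)
  refine (eq_bernoulli_of_sum_choose
    (c := fun i => ∑ k ∈ range (i + 1), w k * stirlingSecond i k) (fun m => ?_) n).symm
  cases m with
  | zero => simp
  | succ m =>
    have extend (i : ℕ) (hi : i ∈ range (m + 2)) :
        ∑ k ∈ range (i + 1), w k * stirlingSecond i k =
          ∑ k ∈ range (m + 2), w k * stirlingSecond i k :=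
      (sum_range_mul_stirlingSecond_of_lt w (mem_range.1 hi)).symm
    calc ∑ i ∈ range (m + 1), ((m + 1).choose i : ℚ) *
          ∑ k ∈ range (i + 1), w k * stirlingSecond i k
        = ∑ i ∈ range (m + 2), ((m + 1).choose i : ℚ) *
            ∑ k ∈ range (i + 1), w k * stirlingSecond i k
          - ∑ k ∈ range (m + 2), w k * stirlingSecond (m + 1) k := by
          rw [sum_range_succ _ (m + 1), Nat.choose_self, Nat.cast_one, one_mul,
            add_sub_cancel_right]
      _ = ∑ k ∈ range (m + 2),
            w k * (stirlingSecond (m + 2) (k + 1) - stirlingSecond (m + 1) k) := by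
          rw [sum_congr rfl fun i hi => by rw [extend i hi]]
          simp only [mul_sum, mul_sub, sum_sub_distrib]
          rw [sum_comm]
          congr 1
          refine sum_congr rfl fun k _ => ?_
          rw [stirlingSecond_succ_succ_eq_sum_choose, Nat.cast_sum, mul_sum]
          push_cast
          exact sum_congr rfl fun i _ => by ring
      _ = ∑ k ∈ range (m + 2), (-1 : ℚ) ^ k * k ! * stirlingSecond (m + 1) (k + 1) := by
          refine sum_congr rfl fun k _ => ?_
          have hw : w k * (k + 1) = (-1) ^ k * k ! := div_mul_cancel₀ _ (by positivity)
          rw [stirlingSecond_succ_succ, ← hw]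
          push_cast
          ring
      _ = if m + 1 = 1 then 1 else 0 :=
          sum_range_neg_one_pow_mul_factorial_mul_stirlingSecond (m + 1)

theorem sum_rStirling_eq_bernoulli_eval (r n : ℕ) :
    ∑ k ∈ range (n + 1), (-1 : ℚ) ^ k * k ! / (k + 1) * rStirling r (n + r) (k + r) =
      (Polynomial.bernoulli n).eval (r : ℚ) := by
  simp only [rStirling_add_eq_sum_choose, Nat.cast_sum, Nat.cast_mul, Nat.cast_pow, mul_sum]
  rw [sum_comm, Polynomial.bernoulli, Polynomial.eval_finsetSum]
  refine sum_congr rfl fun j hj => ?_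
  rw [Polynomial.eval_monomial, bernoulli_eq_sum_stirlingSecond,
    ← sum_range_mul_stirlingSecond_of_lt _ (mem_range.1 hj), sum_mul, sum_mul]
  exact sum_congr rfl fun k _ => by ring

theorem abs_bernoulli_two_mul_le {k : ℕ} (hk : k ≠ 0) :
    |(bernoulli (2 * k) : ℝ)| ≤ 4 * (2 * k)! / (2 * π) ^ (2 * k) := by
  have hζ := hasSum_zeta_nat hk
  have hζ_le : (-1 : ℝ) ^ (k + 1) * 2 ^ (2 * k - 1) * π ^ (2 * k) * bernoulli (2 * k) / (2 * k)! ≤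
      π ^ 2 / 6 := by
    refine hasSum_le (fun i => ?_) hζ hasSum_zeta_two
    rcases i.eq_zero_or_pos with rfl | hi
    · simp [hk]
    · gcongr
      · exact_mod_cast hi
      · omega
  have hζ_nonneg := hζ.nonneg fun i => by positivity
  have hpow : (2 * π) ^ (2 * k) = 2 * (2 ^ (2 * k - 1) * π ^ (2 * k)) := by
    rw [mul_pow, ← mul_assoc, ← pow_succ', Nat.sub_add_cancel (by omega)]
  rw [← abs_of_nonneg hζ_nonneg] at hζ_le
  rw [abs_div, abs_mul, abs_mul, abs_mul, abs_pow, abs_neg, abs_one, one_pow, one_mul,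
    abs_of_pos (by positivity : (0 : ℝ) < 2 ^ (2 * k - 1)),
    abs_of_pos (by positivity : 0 < π ^ (2 * k)),
    Nat.abs_cast, div_le_iff₀ (by positivity)] at hζ_le
  have hπ : π ^ 2 / 6 ≤ 2 := by nlinarith [pi_lt_d2, pi_pos]
  rw [le_div_iff₀ (by positivity), hpow]
  nlinarith [mul_le_mul_of_nonneg_right hπ (Nat.cast_nonneg (α := ℝ) (2 * k)!)]

theorem abs_bernoulli_le (n : ℕ) : |(bernoulli n : ℝ)| ≤ 4 * n ! / (2 * π) ^ n := by
  obtain ⟨k, rfl | rfl⟩ := n.even_or_odd'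
  · rcases eq_or_ne k 0 with rfl | hk
    · norm_num
    · exact abs_bernoulli_two_mul_le hk
  · rcases eq_or_ne k 0 with rfl | hk
    · rw [bernoulli_one, le_div_iff₀ (by positivity)]
      norm_num
      linarith [pi_le_four]
    · rw [bernoulli_eq_zero_of_odd (odd_two_mul_add_one k) (by omega)]
      simp only [Rat.cast_zero, abs_zero]
      positivity

theorem summable_norm_bernoulli_mul_pow_div_factorial {t : ℝ} (ht : |t| < 2 * π) :
    Summable fun n => ‖(bernoulli n : ℝ) * t ^ n / (n ! : ℝ)‖ := by
  have hq : |t| / (2 * π) < 1 := (div_lt_one (by positivity)).2 ht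
  refine .of_nonneg_of_le (fun n => norm_nonneg _) (fun n => ?_)
    ((summable_geometric_of_lt_one (by positivity) hq).mul_left 4)
  calc ‖(bernoulli n : ℝ) * t ^ n / (n ! : ℝ)‖ = |(bernoulli n : ℝ)| * |t| ^ n / n ! := by
        simp only [norm_div, norm_mul, norm_pow, Real.norm_eq_abs, Nat.abs_cast]
    _ ≤ 4 * n ! / (2 * π) ^ n * |t| ^ n / n ! := by gcongr; exact abs_bernoulli_le n
    _ = 4 * (|t| / (2 * π)) ^ n := by rw [div_pow]; field_simp

theorem hasSum_sum_choose_mul_pow_mul_exp {b : ℕ → ℝ} {t B : ℝ}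
    (hb : Summable fun n => ‖b n * t ^ n / (n ! : ℝ)‖) (hB : HasSum (fun n => b n * t ^ n / n !) B)
    (x : ℝ) :
    HasSum (fun n => (∑ j ∈ range (n + 1), n.choose j * b j * x ^ (n - j)) * t ^ n / n !)
      (B * exp (x * t)) := by
  have hexp : HasSum (fun n => (x * t) ^ n / n !) (exp (x * t)) := by
    rw [exp_eq_exp_ℝ]; exact NormedSpace.expSeries_div_hasSum_exp (x * t)
  have hcauchy := hasSum_sum_range_mul_of_summable_norm hb
    (NormedSpace.norm_expSeries_div_summable (x * t))
  rw [hB.tsum_eq, hexp.tsum_eq] at hcauchy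
  refine hcauchy.congr_fun fun n => ?_
  rw [sum_mul, sum_div]
  refine sum_congr rfl fun j hj => ?_
  have hjn := mem_range_succ_iff.1 hj
  have hfact : (n ! : ℝ) = n.choose j * j ! * (n - j)! := by
    exact_mod_cast (Nat.choose_mul_factorial_mul_factorial hjn).symm
  have hpow : t ^ n = t ^ j * t ^ (n - j) := by rw [← pow_add, Nat.add_sub_cancel' hjn]
  have hchoose : (n.choose j : ℝ) ≠ 0 := by exact_mod_cast (Nat.choose_pos hjn).ne'
  rw [hfact, hpow, mul_pow]
  field_simp

theorem hasSum_bernoulli_mul_pow_div_factorial {t : ℝ} (ht : |t| < 2 * π) (ht0 : t ≠ 0) :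
    HasSum (fun n => (bernoulli n : ℝ) * t ^ n / n !) (t / (exp t - 1)) := by
  have hb := summable_norm_bernoulli_mul_pow_div_factorial ht
  obtain ⟨B, hB⟩ := hb.of_norm
  have hconv (n : ℕ) : ∑ j ∈ range (n + 1), n.choose j * (bernoulli j : ℝ) * 1 ^ (n - j) =
      bernoulli n + if n = 1 then 1 else 0 := by
    simp only [one_pow, mul_one]
    rw [sum_range_succ, Nat.choose_self, Nat.cast_one, one_mul, add_comm]
    have h := congrArg (Rat.cast : ℚ → ℝ) (sum_bernoulli n)
    push_cast at h
    rw [h, apply_ite Rat.cast, Rat.cast_one, Rat.cast_zero]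
  have hshift :
      HasSum (fun n => (bernoulli n + if n = 1 then 1 else 0 : ℝ) * t ^ n / n !) (B + t) := by
    have hX : (fun n => (if n = 1 then 1 else 0 : ℝ) * t ^ n / n !) =
        fun n => if n = 1 then t else 0 := by
      funext n
      split_ifs with h <;> simp [h]
    simp only [add_mul, add_div]
    exact hB.add (hX ▸ hasSum_ite_eq 1 t)
  have hkey : B * exp t = B + t := by
    have := hasSum_sum_choose_mul_pow_mul_exp hb hB 1
    simp only [hconv, one_mul] at this
    exact this.unique hshift
  have hexp : exp t - 1 ≠ 0 := sub_ne_zero.2 (mt (exp_eq_one_iff t).1 ht0)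
  have hBt : B = t / (exp t - 1) := by
    rw [eq_div_iff hexp]
    linear_combination hkey
  exact hBt ▸ hB

theorem hasSum_bernoulliFun_mul_pow_div_factorial (x : ℝ) {t : ℝ} (ht : |t| < 2 * π)
    (ht0 : t ≠ 0) :
    HasSum (fun n => bernoulliFun n x * t ^ n / n !) (t * exp (x * t) / (exp t - 1)) := by
  have h := hasSum_sum_choose_mul_pow_mul_exp (summable_norm_bernoulli_mul_pow_div_factorial ht)
    (hasSum_bernoulli_mul_pow_div_factorial ht ht0) x
  rw [div_mul_eq_mul_div] at h
  refine h.congr_fun fun n => ?_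
  simp only [bernoulliFun, Polynomial.bernoulli, Polynomial.map_sum, Polynomial.map_monomial,
    Polynomial.eval_finsetSum, Polynomial.eval_monomial, map_mul, eq_ratCast, map_natCast]
  exact congrArg (· * t ^ n / n !) (sum_congr rfl fun j _ => by ring)

theorem egf_neg_alt_sum (r : ℕ) (t : ℝ) (ht : |t| < 2 * Real.pi) (ht0 : t ≠ 0) :
    HasSum
      (fun n : ℕ =>
        (-(∑ k ∈ Finset.range (n + 1),
            (-1 : ℝ) ^ (k + 1) * (Nat.factorial k : ℝ) / (k + 1) *
              rStirling r (n + r) (k + r))) * t ^ n / Nat.factorial n)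
      (t * Real.exp (r * t) / (Real.exp t - 1)) := by
  refine (hasSum_bernoulliFun_mul_pow_div_factorial r ht ht0).congr_fun fun n => ?_
  rw [bernoulliFun, Polynomial.eval_natCast_map, ← sum_rStirling_eq_bernoulli_eval,
    ← sum_neg_distrib]
  push_cast
  exact congrArg (· * t ^ n / n !) (sum_congr rfl fun k _ => by ring)
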